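/- Let t ≥ 2 be a rational number, G a minimally t-tough, claw-free graph with minimum degree δ(G) ≥ ⌈3t⌉, and A an atom of G. Then no vertex of A is contained in any 2t-vertex-cut of G. -/

import Mathlib

open SimpleGraph

variable {V : Type*}

/-- `numComponents G S` is the number of connected components of `G − S`,
the graph obtained from `G` by deleting the vertices of `S`. -/
noncomputable def numComponents (G : SimpleGraph V) (S : Set V) : ℕ :=
  Nat.card ((G.induce Sᶜ).ConnectedComponent)

/-- `HasToughness G t` says that the toughness of `G` is exactly `t`, i.e.
`t = min { |S| / w(G−S) : S ⊆ V(G), w(G−S) ≥ 2 }`.  (For a complete graph no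
such `S` exists and this predicate never holds, matching `τ(G) = ∞`.) -/
def HasToughness [Fintype V] (G : SimpleGraph V) (t : ℚ) : Prop :=
  (∀ S : Finset V, 2 ≤ numComponents G ↑S →
      t ≤ (S.card : ℚ) / (numComponents G ↑S : ℚ)) ∧
  ∃ S : Finset V, 2 ≤ numComponents G ↑S ∧
      t = (S.card : ℚ) / (numComponents G ↑S : ℚ)

/-- `G` is minimally `t`-tough: `τ(G) = t` and `τ(G − e) < t` for every edge
`e` of `G` (i.e. some vertex set witnesses a ratio `< t` in `G − e`). -/
def MinimallyTough [Fintype V] (G : SimpleGraph V) (t : ℚ) : Prop :=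
  HasToughness G t ∧
  ∀ u v : V, G.Adj u v →
    ∃ S : Finset V, 2 ≤ numComponents (G.deleteEdges {s(u, v)}) ↑S ∧
      (S.card : ℚ) / (numComponents (G.deleteEdges {s(u, v)}) ↑S : ℚ) < t

/-- `G` is claw-free: it has no induced subgraph isomorphic to `K_{1,3}`. -/
def ClawFree (G : SimpleGraph V) : Prop :=
  ¬ ∃ v a b c : V, a ≠ b ∧ a ≠ c ∧ b ≠ c ∧
      G.Adj v a ∧ G.Adj v b ∧ G.Adj v c ∧
      ¬ G.Adj a b ∧ ¬ G.Adj a c ∧ ¬ G.Adj b c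

/-- The vertex connectivity `κ(G)` of a noncomplete graph: the least cardinality
of a vertex set whose deletion disconnects `G`. -/
noncomputable def vconn [Fintype V] (G : SimpleGraph V) : ℕ :=
  sInf {k | ∃ S : Finset V, S.card = k ∧ 2 ≤ numComponents G ↑S}

/-- The vertex set of the connected component of `G − S` containing `u`
(empty if `u ∈ S`). -/
def compOf (G : SimpleGraph V) (S : Set V) (u : V) : Set V :=
  {w | ∃ (hu : u ∈ Sᶜ) (hw : w ∈ Sᶜ), (G.induce Sᶜ).Reachable ⟨u, hu⟩ ⟨w, hw⟩}

/-- `Dset G S u` is the union of the components of `G − S` other than the one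
containing `u`. -/
def Dset (G : SimpleGraph V) (S : Set V) (u : V) : Set V :=
  Sᶜ \ compOf G S u

/-- `nbrsIn G X Y = N_X(Y)`: the set of vertices in `X − Y` adjacent (in `G`)
to some vertex of `Y`. -/
def nbrsIn (G : SimpleGraph V) (X Y : Set V) : Set V :=
  {x | x ∈ X \ Y ∧ ∃ y ∈ Y, G.Adj x y}

/-- The edge `uv` is a bridge of the graph `G − S`: both endpoints survive the
deletion of `S`, they are adjacent, and deleting the edge `uv` increases the
number of connected components of `G − S`. -/
def IsBridgeIn (G : SimpleGraph V) (S : Set V) (u v : V) : Prop :=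
  u ∉ S ∧ v ∉ S ∧ G.Adj u v ∧
    numComponents G S < numComponents (G.deleteEdges {s(u, v)}) S

/-- `GoodCut G t u v S`: `S` is a vertex set with `w(G−S) ≤ |S|/t`,
`w((G−e)−S) > |S|/t` and such that `e = uv` is a bridge in `G − S`. -/
def GoodCut [Fintype V] (G : SimpleGraph V) (t : ℚ) (u v : V) (S : Finset V) : Prop :=
  (numComponents G ↑S : ℚ) ≤ (S.card : ℚ) / t ∧
  (S.card : ℚ) / t < (numComponents (G.deleteEdges {s(u, v)}) ↑S : ℚ) ∧
  IsBridgeIn G ↑S u v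

/-- `S` is a minimum-cardinality vertex set as guaranteed by Lemma 2.2,
i.e. `S = S(e)` for the edge `e = uv`. -/
def IsMinGoodCut [Fintype V] (G : SimpleGraph V) (t : ℚ) (u v : V) (S : Finset V) : Prop :=
  GoodCut G t u v S ∧ ∀ S' : Finset V, GoodCut G t u v S' → S.card ≤ S'.card

/-- `x` is contained in some `2t`-vertex-cut of `G`. -/
def InTwoTCut [Fintype V] (G : SimpleGraph V) (t : ℚ) (x : V) : Prop :=
  ∃ T : Finset V, (T.card : ℚ) = 2 * t ∧ 2 ≤ numComponents G ↑T ∧ x ∈ T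

/-- A fragment of `G`: the vertex set of a connected component of `G − T` for
some minimum vertex cut `T` of `G`. -/
def IsGraphFragment [Fintype V] (G : SimpleGraph V) (A : Set V) : Prop :=
  ∃ (T : Finset V) (a : V), T.card = vconn G ∧ 2 ≤ numComponents G ↑T ∧
    a ∉ T ∧ A = compOf G ↑T a

/-- An atom of `G`: a fragment of minimum cardinality. -/
def IsGraphAtom [Fintype V] (G : SimpleGraph V) (A : Set V) : Prop :=
  IsGraphFragment G A ∧ ∀ B : Set V, IsGraphFragment G B → A.ncard ≤ B.ncard

/-!
By toughness every vertex cut has at least `2t` vertices, so a `2t`-cut `T` is a minimum cut and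
`κ(G) = 2t`. A vertex of an atom `A` has all its neighbours in `A` or in the minimum cut `S` that
cuts `A` off, so `δ(G) ≥ 3t` forces `|A| > t = κ/2`. On the other hand an atom meeting a minimum
cut `T` has at most `κ/2` vertices (Mader): `S` and `T` split `V` into nine cells, and each corner
cell is enclosed by the three cells of `S ∪ T` next to it. These form a vertex cut, so they have at
least `κ` vertices, and more than `κ` around a nonempty corner of `A`, which would otherwise be a
fragment smaller than `A`. Counting cells gives the bound.
-/

/-- `X` is a union of components of `G − W`. -/
def Encloses (G : SimpleGraph V) (W X : Set V) : Prop :=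
  Disjoint X W ∧ ∀ ⦃a b⦄, a ∈ X → G.Adj a b → b ∈ X ∪ W

lemma Set.ncard_eq_inter_add_inter_add_inter [Finite V] {X W : Set V} (h : Disjoint X W)
    (Z : Set V) : Z.ncard = (Z ∩ X).ncard + (Z ∩ W).ncard + (Z ∩ (Wᶜ \ X)).ncard := by
  rw [← Set.ncard_inter_add_ncard_sdiff_eq_ncard Z W,
    ← Set.ncard_inter_add_ncard_sdiff_eq_ncard (Z \ W) X]
  have hX : (Z \ W) ∩ X = Z ∩ X := by
    ext z
    have := fun hz : z ∈ X => Set.disjoint_left.1 h hz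
    simp only [Set.mem_inter_iff, Set.mem_sdiff]
    tauto
  have hrest : (Z \ W) \ X = Z ∩ (Wᶜ \ X) := by
    ext z; simp only [Set.mem_inter_iff, Set.mem_sdiff, Set.mem_compl_iff]; tauto
  rw [hX, hrest]; ring

lemma Set.ncard_eq_inter_add_inter_add_inter' [Finite V] {X W : Set V} (h : Disjoint X W)
    (Z : Set V) : Z.ncard = (X ∩ Z).ncard + (W ∩ Z).ncard + ((Wᶜ \ X) ∩ Z).ncard := by
  simpa only [Set.inter_comm Z] using Set.ncard_eq_inter_add_inter_add_inter h Z

section Cuts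

variable {G : SimpleGraph V} {W X W' X' : Set V} {u x y : V}

lemma mem_compOf_self (hu : u ∉ W) : u ∈ compOf G W u :=
  ⟨hu, hu, Reachable.refl _⟩

lemma encloses_compOf : Encloses G W (compOf G W u) := by
  refine ⟨Set.disjoint_left.2 fun w ⟨_, hw, _⟩ => hw, fun a b ⟨hu, ha, hr⟩ hab => ?_⟩
  by_cases hb : b ∈ W
  · exact Or.inr hb
  · exact Or.inl ⟨hu, hb, hr.trans (Adj.reachable (by simpa [comap_adj] using hab))⟩

lemma Encloses.compl_diff (hX : Encloses G W X) : Encloses G W (Wᶜ \ X) := by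
  refine ⟨Set.disjoint_left.2 fun a ha => ha.1, fun a b ha hab => ?_⟩
  by_cases hb : b ∈ W
  · exact Or.inr hb
  · refine Or.inl ⟨hb, fun hbX => ?_⟩
    rcases hX.2 hbX hab.symm with h | h
    exacts [ha.2 h, ha.1 h]

lemma Encloses.inter (hX : Encloses G W X) (hX' : Encloses G W' X') :
    Encloses G (W ∩ X' ∪ W ∩ W' ∪ X ∩ W') (X ∩ X') := by
  refine ⟨Set.disjoint_left.2 fun a ⟨haX, haX'⟩ hB => ?_, fun a b ⟨haX, haX'⟩ hab => ?_⟩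
  · rcases hB with (⟨haW, -⟩ | ⟨haW, -⟩) | ⟨-, haW'⟩
    exacts [Set.disjoint_left.1 hX.1 haX haW, Set.disjoint_left.1 hX.1 haX haW,
      Set.disjoint_left.1 hX'.1 haX' haW']
  · rcases hX.2 haX hab with hb | hb <;> rcases hX'.2 haX' hab with hb' | hb'
    exacts [Or.inl ⟨hb, hb'⟩, Or.inr (Or.inr ⟨hb, hb'⟩), Or.inr (Or.inl (Or.inl ⟨hb, hb'⟩)),
      Or.inr (Or.inl (Or.inr ⟨hb, hb'⟩))]

lemma Encloses.mem_of_walk (hX : Encloses G W X) {a b : ↥Wᶜ} (p : (G.induce Wᶜ).Walk a b) :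
    (a : V) ∈ X → (b : V) ∈ X := by
  induction p with
  | nil => exact id
  | @cons _ c _ hac _ ih =>
    intro ha
    rcases hX.2 ha (by simpa [comap_adj] using hac) with hc | hc
    exacts [ih hc, absurd hc c.2]

lemma Encloses.compOf_subset (hX : Encloses G W X) (hx : x ∈ X) : compOf G W x ⊆ X := by
  rintro w ⟨_, _, ⟨p⟩⟩
  exact hX.mem_of_walk p hx

lemma Encloses.two_le_numComponents [Finite V] (hX : Encloses G W X) (hx : x ∈ X)
    (hy : y ∉ X ∪ W) : 2 ≤ numComponents G W := by
  have hxW : x ∉ W := Set.disjoint_left.1 hX.1 hx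
  have hyW : y ∉ W := fun h => hy (Or.inr h)
  refine Finite.one_lt_card_iff_nontrivial.2 ⟨⟨(G.induce Wᶜ).connectedComponentMk ⟨x, hxW⟩,
    (G.induce Wᶜ).connectedComponentMk ⟨y, hyW⟩, fun h => hy (Or.inl ?_)⟩⟩
  exact hX.compOf_subset hx ⟨hxW, hyW, ConnectedComponent.eq.1 h⟩

lemma exists_encloses_of_two_le_numComponents [Finite V] (h : 2 ≤ numComponents G W) :
    ∃ X, Encloses G W X ∧ ∃ x ∈ X, ∃ y, y ∉ X ∪ W := by
  obtain ⟨c, d, hcd⟩ := Finite.one_lt_card_iff_nontrivial.1 h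
  obtain ⟨⟨x, hx⟩, rfl⟩ := c.exists_rep
  obtain ⟨⟨y, hy⟩, rfl⟩ := d.exists_rep
  refine ⟨compOf G W x, encloses_compOf, x, mem_compOf_self hx, y, ?_⟩
  rintro (⟨_, _, hr⟩ | hyW)
  exacts [hcd (ConnectedComponent.eq.2 hr), hy hyW]

lemma Encloses.degree_lt [Finite V] (hX : Encloses G W X) {a : V} (ha : a ∈ X)
    [Fintype (G.neighborSet a)] : G.degree a < X.ncard + W.ncard := by
  have hN : G.neighborSet a ⊆ (X \ {a}) ∪ W := fun b hab => by
    rcases hX.2 ha hab with hb | hb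
    exacts [Or.inl ⟨hb, fun h => G.loopless.irrefl a (h ▸ hab)⟩, Or.inr hb]
  calc G.degree a = (G.neighborSet a).ncard := by
        rw [← card_neighborSet_eq_degree, ← Nat.card_eq_fintype_card, Nat.card_coe_set_eq]
    _ ≤ (X \ {a}).ncard + W.ncard := (Set.ncard_le_ncard hN).trans (Set.ncard_union_le _ _)
    _ < X.ncard + W.ncard := by
        have := Set.ncard_sdiff_singleton_lt_of_mem ha
        omega

lemma ncard_corner_le : (W ∩ X' ∪ W ∩ W' ∪ X ∩ W').ncard ≤
    (W ∩ X').ncard + (W ∩ W').ncard + (X ∩ W').ncard :=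
  (Set.ncard_union_le _ _).trans (Nat.add_le_add_right (Set.ncard_union_le _ _) _)

lemma notMem_corner_of_notMem (hy : y ∉ X' ∪ W') :
    y ∉ X ∩ X' ∪ (W ∩ X' ∪ W ∩ W' ∪ X ∩ W') := by
  simp only [Set.mem_union, Set.mem_inter_iff] at hy ⊢
  tauto

section Connectivity

variable [Fintype V]

lemma vconn_le_card {S : Finset V} (h : 2 ≤ numComponents G S) : vconn G ≤ S.card :=
  Nat.sInf_le ⟨S, rfl, h⟩

lemma vconn_le_ncard (h : 2 ≤ numComponents G W) : vconn G ≤ W.ncard := by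
  rw [Set.ncard_eq_toFinset_card W]
  exact vconn_le_card (by rwa [Set.Finite.coe_toFinset])

lemma exists_card_eq_vconn {S : Finset V} (h : 2 ≤ numComponents G S) :
    ∃ S' : Finset V, S'.card = vconn G ∧ 2 ≤ numComponents G S' :=
  Nat.sInf_mem (s := {k | ∃ S : Finset V, S.card = k ∧ 2 ≤ numComponents G S}) ⟨S.card, S, rfl, h⟩

lemma HasToughness.two_mul_le_card {t : ℚ} (ht : HasToughness G t) {S : Finset V}
    (h : 2 ≤ numComponents G S) : 2 * t ≤ S.card := by
  have hw : (2 : ℚ) ≤ numComponents G S := by exact_mod_cast h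
  have hratio := (le_div_iff₀ (by linarith)).1 (ht.1 S h)
  nlinarith

lemma HasToughness.vconn_eq_card {t : ℚ} (ht : HasToughness G t) {T : Finset V}
    (hT : (T.card : ℚ) = 2 * t) (hcut : 2 ≤ numComponents G T) : vconn G = T.card := by
  obtain ⟨S, hS, hScut⟩ := exists_card_eq_vconn hcut
  have := ht.two_mul_le_card hScut
  refine le_antisymm (vconn_le_card hcut) ?_
  rw [← hS]; exact_mod_cast hT ▸ this

lemma IsGraphFragment.exists_encloses (hA : IsGraphFragment G X) :
    ∃ S : Set V, S.ncard = vconn G ∧ Encloses G S X := by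
  obtain ⟨S, a, hS, -, -, rfl⟩ := hA
  exact ⟨S, by rw [Set.ncard_coe_finset, hS], encloses_compOf⟩

lemma IsGraphAtom.ncard_le_of_encloses {A : Set V} (hA : IsGraphAtom G A)
    (hW : W.ncard = vconn G) (hX : Encloses G W X) (hx : x ∈ X) (hy : y ∉ X ∪ W) :
    A.ncard ≤ X.ncard := by
  have hcut := hX.two_le_numComponents hx hy
  have hfrag : IsGraphFragment G (compOf G W x) := by
    refine ⟨(Set.toFinite W).toFinset, x, ?_, ?_, ?_, ?_⟩
    · rw [← Set.ncard_eq_toFinset_card W, hW]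
    · rwa [Set.Finite.coe_toFinset]
    · rw [Set.Finite.mem_toFinset]; exact Set.disjoint_left.1 hX.1 hx
    · rw [Set.Finite.coe_toFinset]
  exact (hA.2 _ hfrag).trans (Set.ncard_le_ncard (hX.compOf_subset hx))

lemma vconn_le_corner (hX : Encloses G W X) (hX' : Encloses G W' X')
    (hne : (X ∩ X').Nonempty) (hy : y ∉ X' ∪ W') :
    vconn G ≤ (W ∩ X').ncard + (W ∩ W').ncard + (X ∩ W').ncard := by
  obtain ⟨x, hx⟩ := hne
  exact (vconn_le_ncard ((hX.inter hX').two_le_numComponents hx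
    (notMem_corner_of_notMem hy))).trans ncard_corner_le

lemma IsGraphAtom.vconn_lt_corner {A : Set V} (hA : IsGraphAtom G A) (hAW : Encloses G W A)
    (hX' : Encloses G W' X') (hne : (A ∩ X').Nonempty) (hy : y ∉ X' ∪ W')
    (hAW' : (A ∩ W').Nonempty) :
    vconn G < (W ∩ X').ncard + (W ∩ W').ncard + (A ∩ W').ncard := by
  obtain ⟨x, hx⟩ := hne
  obtain ⟨z, hzA, hzW'⟩ := hAW'
  have hcorner := hAW.inter hX'
  have hle := vconn_le_ncard (hcorner.two_le_numComponents hx (notMem_corner_of_notMem hy))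
  refine lt_of_lt_of_le (lt_of_le_of_ne hle fun heq => ?_) ncard_corner_le
  have hsmall : (A ∩ X').ncard < A.ncard := Set.ncard_lt_ncard
    ⟨Set.inter_subset_left, fun h => Set.disjoint_left.1 hX'.1 (h hzA).2 hzW'⟩
  exact hsmall.not_ge (hA.ncard_le_of_encloses heq.symm hcorner hx
    (notMem_corner_of_notMem hy))

theorem IsGraphAtom.two_mul_ncard_le_vconn {A T : Set V} (hA : IsGraphAtom G A)
    (hT : T.ncard = vconn G) (hTcut : 2 ≤ numComponents G T) (hAT : (A ∩ T).Nonempty) :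
    2 * A.ncard ≤ vconn G := by
  obtain ⟨S, hS, hAS⟩ := hA.1.exists_encloses
  obtain ⟨F, hFT, u, hu, v, hv⟩ := exists_encloses_of_two_le_numComponents hTcut
  have hAbS := hAS.compl_diff
  have hFbT := hFT.compl_diff
  have hvFb : v ∈ Tᶜ \ F := ⟨fun h => hv (Or.inr h), fun h => hv (Or.inl h)⟩
  have huFb : u ∉ (Tᶜ \ F) ∪ T := by
    rintro (⟨-, h⟩ | h)
    exacts [h hu, Set.disjoint_left.1 hFT.1 hu h]
  have rowA := Set.ncard_eq_inter_add_inter_add_inter hFT.1 A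
  have rowS := Set.ncard_eq_inter_add_inter_add_inter hFT.1 S
  have colT := Set.ncard_eq_inter_add_inter_add_inter' hAS.1 T
  have colF := Set.ncard_eq_inter_add_inter_add_inter' hAS.1 F
  have colFb := Set.ncard_eq_inter_add_inter_add_inter' hAS.1 (Tᶜ \ F)
  generalize Sᶜ \ A = Ab at hAbS colT colF colFb
  generalize Tᶜ \ F = Fb at hFbT hvFb huFb rowA rowS colFb
  have hmF : A.ncard ≤ F.ncard := hA.ncard_le_of_encloses hT hFT hu hv
  have hmFb : A.ncard ≤ Fb.ncard := hA.ncard_le_of_encloses hT hFbT hvFb huFb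
  have cAF : 0 < (A ∩ F).ncard → vconn G < (S ∩ F).ncard + (S ∩ T).ncard + (A ∩ T).ncard :=
    fun h => hA.vconn_lt_corner hAS hFT ((Set.ncard_pos).1 h) hv hAT
  have cAFb : 0 < (A ∩ Fb).ncard → vconn G < (S ∩ Fb).ncard + (S ∩ T).ncard + (A ∩ T).ncard :=
    fun h => hA.vconn_lt_corner hAS hFbT ((Set.ncard_pos).1 h) huFb hAT
  have cAbF : 0 < (Ab ∩ F).ncard → vconn G ≤ (S ∩ F).ncard + (S ∩ T).ncard + (Ab ∩ T).ncard :=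
    fun h => vconn_le_corner hAbS hFT ((Set.ncard_pos).1 h) hv
  have cAbFb : 0 < (Ab ∩ Fb).ncard → vconn G ≤ (S ∩ Fb).ncard + (S ∩ T).ncard + (Ab ∩ T).ncard :=
    fun h => vconn_le_corner hAbS hFbT ((Set.ncard_pos).1 h) huFb
  -- If `A` met `F`, then `cAF` and `rowS` would give `|A ∩ T| > |S ∩ Fb|`, so the corner
  -- `Ab ∩ Fb` would be empty by `cAbFb` and `colT`, and `colFb` would contradict `hmFb`.
  -- Hence `A ⊆ T`, and each side `X ∈ {F, Fb}` satisfies `|S ∩ X| ≥ |A|`.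
  omega

end Connectivity

end Cuts

theorem atom_avoids_2t_cuts_general [Fintype V] (G : SimpleGraph V) [DecidableRel G.Adj]
    (t : ℚ) (hmt : MinimallyTough G t)
    (hδ : ∀ v : V, ⌈3 * t⌉ ≤ (G.degree v : ℤ))
    (A : Set V) (hA : IsGraphAtom G A) :
    ∀ x ∈ A, ¬ InTwoTCut G t x := by
  rintro x hxA ⟨T, hTcard, hTcut, hxT⟩
  have hκ : vconn G = T.card := hmt.1.vconn_eq_card hTcard hTcut
  obtain ⟨S, hS, hAS⟩ := hA.1.exists_encloses
  have hdeg : G.degree x < A.ncard + T.card := hκ ▸ hS ▸ hAS.degree_lt hxA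
  have hsmall : 2 * A.ncard ≤ T.card :=
    hκ ▸ hA.two_mul_ncard_le_vconn (by rw [Set.ncard_coe_finset, hκ]) hTcut ⟨x, hxA, hxT⟩
  have h3t : 3 * t ≤ G.degree x := by exact_mod_cast Int.ceil_le.1 (hδ x)
  qify at hdeg hsmall
  linarith

/-- Let `t ≥ 2`, `G` a minimally `t`-tough, claw-free graph with
`δ(G) ≥ ⌈3t⌉`, and `A` an atom of `G`.  Then no vertex of `A` is contained in
any `2t`-vertex-cut of `G`. -/
theorem atom_avoids_2t_cuts [Fintype V] (G : SimpleGraph V) [DecidableRel G.Adj]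
    (t : ℚ) (ht : 2 ≤ t) (hmt : MinimallyTough G t) (hcf : ClawFree G)
    (hδ : ∀ v : V, ⌈3 * t⌉ ≤ (G.degree v : ℤ))
    (A : Set V) (hA : IsGraphAtom G A) :
    ∀ x ∈ A, ¬ InTwoTCut G t x :=
  atom_avoids_2t_cuts_general G t hmt hδ A hA
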